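/- Let I = [a,c] be a compact interval of positive length, let a < a₀ < c₀ < c, and let H be an irreducible subgroup of PL_o([a₀, c₀]). Choose a homeomorphism f ∈ PL_o(I) whose support contains ]a, a₀] ∪ [c₀, c[, and let G be the subgroup of PL_o(I) generated by H ∪ {f}. Let N be the normal closure of H in G. Then {[χ_ℓ], [χ_r]} ⊆ Σ¹(G)^c ⊆ S(G, N), where S(G,N) is the set of rays of non-zero characters of G vanishing on N. -/

import Mathlib

open Set

/-- A map `g : ℝ → ℝ` is *finitary piecewise linear* if there is a finite set of
breakpoints outside of which `g` is locally affine. -/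
def IsFinitaryPL (g : ℝ → ℝ) : Prop :=
  ∃ B : Finset ℝ, ∀ t : ℝ, t ∉ B →
    ∃ m b : ℝ, ∃ ε : ℝ, 0 < ε ∧ ∀ u : ℝ, |u - t| < ε → g u = m * u + b

/-- The support of a map of the real line. -/
def suppOf (g : ℝ → ℝ) : Set ℝ := {t : ℝ | g t ≠ t}

/-- `PLo I` is the set of orientation-preserving (i.e. strictly increasing) finitary
piecewise linear homeomorphisms of `ℝ` with support contained in `I`. -/
def PLo (I : Set ℝ) : Set (Equiv.Perm ℝ) :=
  {g : Equiv.Perm ℝ | StrictMono ⇑g ∧ IsFinitaryPL ⇑g ∧ suppOf ⇑g ⊆ I}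

/-- The right derivative of `g` at `a`. -/
noncomputable def rightSlope (g : ℝ → ℝ) (a : ℝ) : ℝ := derivWithin g (Ici a) a

/-- The left derivative of `g` at `c`. -/
noncomputable def leftSlope (g : ℝ → ℝ) (c : ℝ) : ℝ := derivWithin g (Iic c) c

/-- The amplitude of the translation with which `g` coincides near `+∞`. -/
noncomputable def amplTop (g : ℝ → ℝ) : ℝ :=
  Filter.limUnder Filter.atTop (fun t => g t - t)

/-- The amplitude of the translation with which `g` coincides near `-∞`. -/
noncomputable def amplBot (g : ℝ → ℝ) : ℝ :=
  Filter.limUnder Filter.atBot (fun t => g t - t)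

/-- A character of a group is a homomorphism into `(ℝ, +)`. -/
def IsChar {Γ : Type*} [Group Γ] (χ : Γ → ℝ) : Prop :=
  ∀ g h : Γ, χ (g * h) = χ g + χ h

/-- Two characters lie on the same ray: `ψ` is a positive multiple of `χ`. -/
def SameRayChar {Γ : Type*} (χ ψ : Γ → ℝ) : Prop :=
  ∃ r : ℝ, 0 < r ∧ ∀ g : Γ, ψ g = r * χ g

/-- The subgraph `Γ(G, X)_χ` of the Cayley graph of `G` with respect to the generating
set `X`, spanned by the vertices `g` with `χ g ≥ 0`, is connected. -/
def CayleyConnected {Γ : Type*} [Group Γ] (X : Set Γ) (χ : Γ → ℝ) : Prop :=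
  ∀ g h : Γ, 0 ≤ χ g → 0 ≤ χ h →
    Relation.ReflTransGen
      (fun u v : Γ => 0 ≤ χ u ∧ 0 ≤ χ v ∧ ∃ x ∈ X, v = u * x ∨ u = v * x) g h

/-- `[χ] ∈ Σ¹(G)`: for every generating set `X` of `G` the subgraph `Γ(G,X)_χ`
of the Cayley graph is connected. -/
def MemSigma1 {Γ : Type*} [Group Γ] (χ : Γ → ℝ) : Prop :=
  ∀ X : Set Γ, Subgroup.closure X = ⊤ → CayleyConnected X χ

/-- The character `χ_ℓ = ln ∘ σ_ℓ` of a subgroup `G` of `PL_o([a,c])`. -/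
noncomputable def chiL (G : Subgroup (Equiv.Perm ℝ)) (a : ℝ) : G → ℝ :=
  fun g => Real.log (rightSlope (⇑(g : Equiv.Perm ℝ)) a)

/-- The character `χ_r = ln ∘ σ_r` of a subgroup `G` of `PL_o([a,c])`. -/
noncomputable def chiR (G : Subgroup (Equiv.Perm ℝ)) (c : ℝ) : G → ℝ :=
  fun g => Real.log (leftSlope (⇑(g : Equiv.Perm ℝ)) c)

/-!
Suppose `χ h₀ > 0` for some `h₀ ∈ H` and fix a generating set `X`. Call `w ∈ G` good
(`ConjPowersJoined`) if every `w h₀ʲ w⁻¹` is joined to `1` in `Γ(G,X)_χ`. If `v` is good and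
`v [a₀,c₀]`, `w [a₀,c₀]` are disjoint, the elements `v h₀ⁱ v⁻¹` commute with `w h₀ʲ w⁻¹` and have
arbitrarily large character, so a detour through one of them joins `w h₀ʲ w⁻¹` to `1`: `w` is good.
Some power of a letter of positive character is good, and `G` moves `[a₀,c₀]` arbitrarily close
to `a`, so every element is good and `Γ(G,X)_χ` is connected. Thus a character outside `Σ¹`
vanishes on `H`, hence on `N`.

For `χ_ℓ`, let `φ ∈ {f, f⁻¹}` contract `]a,a₀]` and take `X = H ∪ {f}`. The property
"`u φⁿ` fixes `[a,a₀)` for some `n`" survives every edge of `Γ(G,X)_{χ_ℓ}`, because a step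
`u ↦ u φ` from such a `u` reaches `χ_ℓ = ln (slope of φ) < 0`; it fails for a conjugate
`φ σ φ⁻¹` with `σ ∈ H`, which has `χ_ℓ = 0`. The reflection `t ↦ -t` turns `χ_r` into `χ_ℓ`.
-/

open Equiv Filter Topology

namespace IsChar

variable {Γ : Type*} [Group Γ] {χ : Γ → ℝ}

def toMonoidHom (hχ : IsChar χ) : Γ →* Multiplicative ℝ :=
  MonoidHom.mk' (fun g => Multiplicative.ofAdd (χ g)) fun g h => congrArg _ (hχ g h)

lemma toMonoidHom_apply (hχ : IsChar χ) (g : Γ) :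
    Multiplicative.toAdd (hχ.toMonoidHom g) = χ g := rfl

lemma map_one (hχ : IsChar χ) : χ 1 = 0 := by
  rw [← hχ.toMonoidHom_apply, _root_.map_one, toAdd_one]

lemma map_inv (hχ : IsChar χ) (g : Γ) : χ g⁻¹ = -χ g := by
  rw [← hχ.toMonoidHom_apply, _root_.map_inv, toAdd_inv, hχ.toMonoidHom_apply]

lemma map_pow (hχ : IsChar χ) (g : Γ) (n : ℕ) : χ (g ^ n) = n * χ g := by
  rw [← hχ.toMonoidHom_apply, _root_.map_pow, toAdd_pow, hχ.toMonoidHom_apply, nsmul_eq_mul]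

lemma map_conj (hχ : IsChar χ) (w g : Γ) : χ (w * g * w⁻¹) = χ g := by
  rw [hχ, hχ, hχ.map_inv]; ring

lemma mem_ker_toMonoidHom (hχ : IsChar χ) {g : Γ} : g ∈ hχ.toMonoidHom.ker ↔ χ g = 0 := by
  rw [MonoidHom.mem_ker, ← toAdd_eq_zero, hχ.toMonoidHom_apply]

lemma exists_le_map_pow (hχ : IsChar χ) {h : Γ} (hh : 0 < χ h) (V : ℝ) :
    ∃ i : ℕ, V ≤ χ (h ^ i) := by
  obtain ⟨i, hi⟩ := Archimedean.arch V hh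
  exact ⟨i, by rwa [hχ.map_pow, ← nsmul_eq_mul]⟩

end IsChar

section CayleyGraph

variable {Γ : Type*} [Group Γ] {X : Set Γ} {χ : Γ → ℝ}

def CayleyJoined (X : Set Γ) (χ : Γ → ℝ) : Γ → Γ → Prop :=
  Relation.ReflTransGen fun u v => 0 ≤ χ u ∧ 0 ≤ χ v ∧ ∃ x ∈ X, v = u * x ∨ u = v * x

lemma CayleyJoined.trans {u v w : Γ} (huv : CayleyJoined X χ u v) (hvw : CayleyJoined X χ v w) :
    CayleyJoined X χ u w :=
  Relation.ReflTransGen.trans huv hvw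

lemma CayleyJoined.symm {u v : Γ} (h : CayleyJoined X χ u v) : CayleyJoined X χ v u := by
  induction h with
  | refl => exact .refl
  | tail _ hedge ih =>
    obtain ⟨hu, hv, x, hx, hux⟩ := hedge
    exact .head ⟨hv, hu, x, hx, hux.symm⟩ ih

lemma cayleyJoined_mul_of_mem {u x : Γ} (hx : x ∈ X ∨ x⁻¹ ∈ X) (hu : 0 ≤ χ u)
    (hux : 0 ≤ χ (u * x)) : CayleyJoined X χ u (u * x) := by
  refine .single ⟨hu, hux, ?_⟩
  rcases hx with hx | hx
  · exact ⟨x, hx, .inl rfl⟩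
  · exact ⟨x⁻¹, hx, .inr (by group)⟩

lemma CayleyJoined.mul_left (hχ : IsChar χ) {u v w : Γ} (hw : 0 ≤ χ w)
    (h : CayleyJoined X χ u v) : CayleyJoined X χ (w * u) (w * v) := by
  refine Relation.ReflTransGen.lift (w * ·) (fun p q hedge => ?_) _ _ h
  obtain ⟨hp, hq, x, hx, hpq⟩ := hedge
  refine ⟨by rw [hχ]; linarith, by rw [hχ]; linarith, x, hx, ?_⟩
  rcases hpq with rfl | rfl
  · exact .inl (mul_assoc _ _ _).symm
  · exact .inr (mul_assoc _ _ _).symm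

/-- A word for `g` dips only a bounded amount below its starting point. -/
lemma exists_cayleyJoined_mul (hχ : IsChar χ) (hX : Subgroup.closure X = ⊤) (g : Γ) :
    ∃ d : ℝ, ∀ u, d ≤ χ u → CayleyJoined X χ u (u * g) := by
  have hg : g ∈ Subgroup.closure X := hX ▸ Subgroup.mem_top g
  induction hg using Subgroup.closure_induction with
  | mem x hx =>
    refine ⟨max 0 (-χ x), fun u hu => cayleyJoined_mul_of_mem (.inl hx) ?_ ?_⟩
    · exact (le_max_left _ _).trans hu
    · rw [hχ]; linarith [le_max_right 0 (-χ x)]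
  | one => exact ⟨0, fun u _ => by rw [mul_one]; exact .refl⟩
  | mul x y _ _ ihx ihy =>
    obtain ⟨dx, hdx⟩ := ihx
    obtain ⟨dy, hdy⟩ := ihy
    refine ⟨max dx (dy - χ x), fun u hu => ?_⟩
    have hux : dy ≤ χ (u * x) := by rw [hχ]; linarith [le_max_right dx (dy - χ x)]
    rw [← mul_assoc]
    exact (hdx u ((le_max_left _ _).trans hu)).trans (hdy _ hux)
  | inv x _ ihx =>
    obtain ⟨d, hd⟩ := ihx
    refine ⟨d + χ x, fun u hu => ?_⟩
    have h := hd (u * x⁻¹) (by rw [hχ, hχ.map_inv]; linarith)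
    rw [inv_mul_cancel_right] at h
    exact h.symm

lemma cayleyJoined_mul_pow (hχ : IsChar χ) {x : Γ} {d : ℝ} (hx : 0 ≤ χ x)
    (hstep : ∀ u, d ≤ χ u → CayleyJoined X χ u (u * x)) {u : Γ} (hu : d ≤ χ u) (n : ℕ) :
    CayleyJoined X χ u (u * x ^ n) := by
  induction n with
  | zero => rw [pow_zero, mul_one]; exact .refl
  | succ n ih =>
    have hun : d ≤ χ (u * x ^ n) := by
      rw [hχ, hχ.map_pow]; nlinarith [Nat.cast_nonneg (α := ℝ) n]
    rw [pow_succ, ← mul_assoc]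
    exact ih.trans (hstep _ hun)

lemma exists_pos_cayleyJoined_mul (hχ : IsChar χ) (hX : Subgroup.closure X = ⊤) {g : Γ}
    (hg : χ g ≠ 0) : ∃ y, 0 < χ y ∧ ∀ u, 0 ≤ χ u → CayleyJoined X χ u (u * y) := by
  obtain ⟨x, hx, hx0⟩ : ∃ x ∈ X, χ x ≠ 0 := by
    by_contra! h
    have hker : Subgroup.closure X ≤ hχ.toMonoidHom.ker :=
      (Subgroup.closure_le _).2 fun x hx => hχ.mem_ker_toMonoidHom.2 (h x hx)
    exact hg (hχ.mem_ker_toMonoidHom.1 (hker (hX ▸ Subgroup.mem_top g)))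
  rcases hx0.lt_or_gt with hneg | hpos
  · refine ⟨x⁻¹, by rw [hχ.map_inv]; linarith, fun u hu => ?_⟩
    exact cayleyJoined_mul_of_mem (.inr (by rwa [inv_inv])) hu
      (by rw [hχ, hχ.map_inv]; linarith)
  · exact ⟨x, hpos, fun u hu => cayleyJoined_mul_of_mem (.inl hx) hu (by rw [hχ]; linarith)⟩

/-- Walk `1 ⇝ z ⇝ z g`, the second leg along a word for `g` (possible once `χ z` is large), and
`g ⇝ g (g⁻¹ z g) = z g`. -/
lemma cayleyJoined_one_of_conj (hχ : IsChar χ) (hX : Subgroup.closure X = ⊤) {g : Γ}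
    (hg : 0 ≤ χ g)
    (hz : ∀ V : ℝ, ∃ z, V ≤ χ z ∧ CayleyJoined X χ 1 z ∧ CayleyJoined X χ 1 (g⁻¹ * z * g)) :
    CayleyJoined X χ 1 g := by
  obtain ⟨d, hd⟩ := exists_cayleyJoined_mul hχ hX g
  obtain ⟨z, hdz, h1z, h1conj⟩ := hz d
  have hg_zg : CayleyJoined X χ g (z * g) := by
    simpa [mul_assoc] using h1conj.mul_left hχ hg
  exact (h1z.trans (hd z hdz)).trans hg_zg.symm

def ConjPowersJoined (X : Set Γ) (χ : Γ → ℝ) (h w : Γ) : Prop :=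
  ∀ j : ℕ, CayleyJoined X χ 1 (w * h ^ j * w⁻¹)

variable {h : Γ}

lemma ConjPowersJoined.of_commute (hχ : IsChar χ) (hX : Subgroup.closure X = ⊤) (hh : 0 < χ h)
    {v w : Γ} (hv : ConjPowersJoined X χ h v)
    (hcomm : ∀ i j : ℕ, Commute (v * h ^ i * v⁻¹) (w * h ^ j * w⁻¹)) :
    ConjPowersJoined X χ h w := by
  intro j
  refine cayleyJoined_one_of_conj hχ hX ?_ fun V => ?_
  · rw [hχ.map_conj, hχ.map_pow]; positivity
  · obtain ⟨i, hi⟩ := hχ.exists_le_map_pow hh V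
    refine ⟨v * h ^ i * v⁻¹, by rwa [hχ.map_conj], hv i, ?_⟩
    rw [mul_assoc, (hcomm i j).eq, inv_mul_cancel_left]
    exact hv i

lemma exists_conjPowersJoined (hχ : IsChar χ) (hX : Subgroup.closure X = ⊤) (hh : 0 < χ h) :
    ∃ Y, ConjPowersJoined X χ h Y := by
  obtain ⟨y, hy, hystep⟩ := exists_pos_cayleyJoined_mul hχ hX hh.ne'
  obtain ⟨d, hd⟩ := exists_cayleyJoined_mul hχ hX h
  obtain ⟨m, hm⟩ := hχ.exists_le_map_pow hy d
  refine ⟨y ^ m, fun j => ?_⟩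
  have h1Y : CayleyJoined X χ 1 (y ^ m) := by
    simpa using cayleyJoined_mul_pow hχ hy.le hystep hχ.map_one.ge m
  have hYh : CayleyJoined X χ (y ^ m) (y ^ m * h ^ j) :=
    cayleyJoined_mul_pow hχ hh.le hd hm j
  have hconj : CayleyJoined X χ (y ^ m * h ^ j * (y ^ m)⁻¹) (y ^ m * h ^ j) := by
    have hnonneg : 0 ≤ χ (y ^ m * h ^ j * (y ^ m)⁻¹) := by
      rw [hχ.map_conj, hχ.map_pow]; positivity
    simpa using cayleyJoined_mul_pow hχ hy.le hystep hnonneg m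
  exact (h1Y.trans hYh).trans hconj.symm

lemma cayleyConnected_of_forall_conjPowersJoined (hχ : IsChar χ) (hX : Subgroup.closure X = ⊤)
    (hh : 0 < χ h) (hall : ∀ w, ConjPowersJoined X χ h w) : CayleyConnected X χ := by
  have hjoin : ∀ g, 0 ≤ χ g → CayleyJoined X χ 1 g := fun g hg =>
    cayleyJoined_one_of_conj hχ hX hg fun V => by
      obtain ⟨i, hi⟩ := hχ.exists_le_map_pow hh V
      refine ⟨g * h ^ i * g⁻¹, by rwa [hχ.map_conj], hall g i, ?_⟩
      simpa [mul_assoc] using hall 1 i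
  exact fun g k hg hk => (hjoin g hg).symm.trans (hjoin k hk)

/-- The property `∃ n, u φⁿ ∈ K` propagates along the edges of `Γ(G,X)_χ` starting at `1`: letters
from `A` are absorbed by `K` after conjugation by `φⁿ`, and a step `u ↦ u φ` with `u ∈ K` leaves
the subgraph. -/
lemma not_cayleyConnected_of_mul_pow_mem {K : Subgroup Γ} {A : Set Γ} {φ g : Γ}
    (hX : X ⊆ A ∪ {φ, φ⁻¹}) (hA : ∀ y ∈ A, ∀ n : ℕ, (φ ^ n)⁻¹ * y * φ ^ n ∈ K)
    (hK : ∀ k ∈ K, χ (k * φ) < 0) (h1 : 0 ≤ χ 1) (hg : 0 ≤ χ g)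
    (hgK : ∀ n : ℕ, g * φ ^ n ∉ K) : ¬ CayleyConnected X χ := by
  intro hconn
  suffices ∀ v, CayleyJoined X χ 1 v → ∃ n : ℕ, v * φ ^ n ∈ K by
    obtain ⟨n, hn⟩ := this g (hconn 1 g h1 hg)
    exact hgK n hn
  intro v hv
  induction hv with
  | refl => exact ⟨0, by simp⟩
  | @tail u v _ hedge ih =>
    obtain ⟨n, hn⟩ := ih
    obtain ⟨-, hv, x, hx, hux⟩ := hedge
    have hstep : (∃ y, (y ∈ A ∨ y⁻¹ ∈ A) ∧ v = u * y) ∨ v = u * φ ∨ v = u * φ⁻¹ := by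
      rcases hux with rfl | rfl <;> rcases hX hx with hxA | rfl | rfl
      · exact .inl ⟨x, .inl hxA, rfl⟩
      · exact .inr (.inl rfl)
      · exact .inr (.inr rfl)
      · exact .inl ⟨x⁻¹, .inr (by rwa [inv_inv]), by group⟩
      · exact .inr (.inr (by group))
      · exact .inr (.inl (by group))
    rcases hstep with ⟨y, hy, rfl⟩ | rfl | rfl
    · have hconj : (φ ^ n)⁻¹ * y * φ ^ n ∈ K := by
        rcases hy with hy | hy
        · exact hA y hy n
        · simpa [mul_assoc] using K.inv_mem (hA _ hy n)
      refine ⟨n, ?_⟩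
      convert K.mul_mem hn hconj using 1
      group
    · rcases n with _ | n
      · exact absurd hv (not_le.2 (hK u (by simpa using hn)))
      · exact ⟨n, by rwa [mul_assoc, ← pow_succ']⟩
    · exact ⟨n + 1, by rwa [pow_succ', ← mul_assoc, inv_mul_cancel_right]⟩

end CayleyGraph

section PermReal

variable {f g φ : Perm ℝ} {a a₀ c₀ c : ℝ}

lemma StrictMono.perm_inv (hg : StrictMono g) : StrictMono ⇑g⁻¹ :=
  fun x y hxy => hg.lt_iff_lt.1 (by simpa using hxy)

lemma StrictMono.perm_continuous (hg : StrictMono g) : Continuous g :=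
  hg.monotone.continuous_of_surjective g.surjective

lemma apply_eq_self_of_mem_closure (hg : StrictMono g) {s : Set ℝ} (hs : ∀ t ∈ s, g t = t)
    {t : ℝ} (ht : t ∈ closure s) : g t = t :=
  Set.EqOn.closure (f := g) (g := id) hs hg.perm_continuous continuous_id ht

lemma apply_left_eq_of_suppOf_subset (hg : StrictMono g) (h : suppOf g ⊆ Icc a c) : g a = a :=
  apply_eq_self_of_mem_closure (s := Iio a) hg
    (fun t ht => not_not.1 fun hne => (h hne).1.not_gt ht)
    (by rw [closure_Iio]; exact self_mem_Iic)

lemma apply_right_eq_of_suppOf_subset (hg : StrictMono g) (h : suppOf g ⊆ Icc a c) : g c = c :=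
  apply_eq_self_of_mem_closure (s := Ioi c) hg
    (fun t ht => not_not.1 fun hne => (h hne).2.not_gt ht)
    (by rw [closure_Ioi]; exact self_mem_Ici)

lemma apply_eq_self_of_lt (hg : suppOf g ⊆ Icc a₀ c₀) {t : ℝ} (ht : t < a₀) : g t = t :=
  not_not.1 fun hne => (hg hne).1.not_gt ht

lemma apply_eq_self_of_gt (hg : suppOf g ⊆ Icc a₀ c₀) {t : ℝ} (ht : c₀ < t) : g t = t :=
  not_not.1 fun hne => (hg hne).2.not_gt ht

lemma commute_conj_of_lt {v w σ τ : Perm ℝ} (hv : StrictMono v) (hw : StrictMono w)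
    (hσ : suppOf σ ⊆ Icc a₀ c₀) (hτ : suppOf τ ⊆ Icc a₀ c₀) (hvw : v c₀ < w a₀) :
    Commute (v * σ * v⁻¹) (w * τ * w⁻¹) := by
  refine Perm.Disjoint.commute fun t => ?_
  rcases lt_or_ge t (w a₀) with ht | ht
  · right
    have hτt : τ (w⁻¹ t) = w⁻¹ t :=
      apply_eq_self_of_lt hτ (by rw [← hw.lt_iff_lt]; simpa using ht)
    rw [Perm.mul_apply, Perm.mul_apply, hτt]
    exact w.apply_symm_apply t
  · left
    have hσt : σ (v⁻¹ t) = v⁻¹ t :=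
      apply_eq_self_of_gt hσ (by rw [← hv.lt_iff_lt]; simpa using hvw.trans_le ht)
    rw [Perm.mul_apply, Perm.mul_apply, hσt]
    exact v.apply_symm_apply t

lemma forall_lt_or_forall_gt_of_apply_ne (hg : Continuous g) {s : Set ℝ} (hs : IsPreconnected s)
    (hne : ∀ t ∈ s, g t ≠ t) : (∀ t ∈ s, g t < t) ∨ (∀ t ∈ s, t < g t) := by
  by_contra! h
  obtain ⟨⟨t₁, ht₁, hle₁⟩, t₂, ht₂, hle₂⟩ := h
  have hcont : ContinuousOn (fun t => g t - t) s := (hg.sub continuous_id).continuousOn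
  obtain ⟨t, ht, hzero⟩ := hs.intermediate_value ht₂ ht₁ hcont
    (show (0 : ℝ) ∈ Icc (g t₂ - t₂) (g t₁ - t₁) from ⟨by linarith, by linarith⟩)
  exact hne t ht (sub_eq_zero.1 hzero)

lemma exists_inv_or_self_apply_lt (hf : StrictMono f) {s : Set ℝ} (hs : IsPreconnected s)
    (hsupp : s ⊆ suppOf f) : ∃ φ, (φ = f ∨ φ = f⁻¹) ∧ ∀ t ∈ s, φ t < t := by
  rcases forall_lt_or_forall_gt_of_apply_ne hf.perm_continuous hs fun t ht => hsupp ht with h | h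
  · exact ⟨f, .inl rfl, h⟩
  · refine ⟨f⁻¹, .inr rfl, fun t ht => ?_⟩
    rw [← hf.lt_iff_lt]
    simpa using h t ht

lemma pow_apply_le_self (hφ : StrictMono φ) {t : ℝ} (ht : φ t ≤ t) (n : ℕ) : (φ ^ n) t ≤ t := by
  induction n with
  | zero => simp
  | succ n ih =>
    rw [pow_succ, Perm.mul_apply]
    exact ((hφ.monotone.iterate n) ht).trans ih

lemma pow_succ_apply_lt_self (hφ : StrictMono φ) {t : ℝ} (ht : φ t < t) (n : ℕ) :
    (φ ^ (n + 1)) t < t := by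
  rw [pow_succ, Perm.mul_apply]
  exact ((hφ.iterate n) ht).trans_le (pow_apply_le_self hφ ht.le n)

/-- The orbit of `b` under a map pushing `]a, b]` down accumulates only at `a`: an accumulation
point `L > a` would satisfy `φ L < L`, but `φ` maps points just above `L` below `L`. -/
lemma exists_pow_apply_lt (hφ : StrictMono φ) {b : ℝ} (hlt : ∀ t ∈ Ioc a b, φ t < t) {β : ℝ}
    (hβ : a < β) : ∃ k : ℕ, (φ ^ k) b < β := by
  by_contra! h
  have hbdd : BddBelow (range fun k : ℕ => (φ ^ k) b) := ⟨β, by rintro _ ⟨k, rfl⟩; exact h k⟩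
  set L := ⨅ k : ℕ, (φ ^ k) b
  have hLβ : β ≤ L := le_ciInf h
  have hLb : L ≤ b := by simpa using ciInf_le hbdd 0
  have hφL : φ L < L := hlt L ⟨hβ.trans_le hLβ, hLb⟩
  have hLinv : L < φ⁻¹ L := by rw [← hφ.lt_iff_lt]; simpa using hφL
  obtain ⟨k, hk⟩ := exists_lt_of_ciInf_lt hLinv
  have hk' : (φ ^ (k + 1)) b < L := by
    rw [pow_succ', Perm.mul_apply]
    simpa using hφ hk
  exact hk'.not_ge (ciInf_le hbdd (k + 1))

/-- Irreducibility forces `H`-orbits in `]a₀, c₀[` to come arbitrarily close to `a₀`: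
otherwise the infimum of an orbit would be an interior point fixed by `H`. -/
lemma exists_mem_apply_lt_of_irreducible {H : Subgroup (Perm ℝ)} (hmono : ∀ σ ∈ H, StrictMono σ)
    (hirr : ∀ t : ℝ, a₀ < t → t < c₀ → ∃ g ∈ H, g t ≠ t) {s γ : ℝ} (hs : s < c₀) (hγ : a₀ < γ) :
    ∃ σ ∈ H, σ s < γ := by
  by_contra! h
  set O := MulAction.orbit H s
  have hO : O.Nonempty := ⟨s, MulAction.mem_orbit_self s⟩
  have hbdd : BddBelow O := ⟨γ, by rintro _ ⟨σ, rfl⟩; exact h σ σ.2⟩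
  have hγO : γ ≤ sInf O := le_csInf hO (by rintro _ ⟨σ, rfl⟩; exact h σ σ.2)
  have hOs : sInf O ≤ s := csInf_le hbdd (MulAction.mem_orbit_self s)
  obtain ⟨τ, hτH, hτ⟩ := hirr (sInf O) (hγ.trans_le hγO) (hOs.trans_lt hs)
  apply hτ
  let e := StrictMono.orderIsoOfSurjective τ (hmono τ hτH) τ.surjective
  have himage : e '' O = O := MulAction.smul_orbit (⟨τ, hτH⟩ : H) s
  calc τ (sInf O) = e (sInf O) := rfl
    _ = sInf O := by rw [e.map_csInf' hO hbdd, himage]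

lemma strictMono_and_apply_eq_of_mem_closure {S : Set (Perm ℝ)}
    (hS : ∀ g ∈ S, StrictMono g ∧ g a = a) {g : Perm ℝ} (hg : g ∈ Subgroup.closure S) :
    StrictMono g ∧ g a = a := by
  induction hg using Subgroup.closure_induction with
  | mem g hg => exact hS g hg
  | one => exact ⟨strictMono_id, rfl⟩
  | mul g k _ _ hg hk => exact ⟨hg.1.comp hk.1, by simp [hg.2, hk.2]⟩
  | inv g _ hg => exact ⟨hg.1.perm_inv, by rw [Perm.inv_eq_iff_eq, hg.2]⟩

end PermReal

section Connectivity

variable {a a₀ c₀ : ℝ} {H G : Subgroup (Perm ℝ)} {f : Perm ℝ}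

lemma exists_mem_apply_c₀_lt (h1 : a < a₀) (hHG : H ≤ G)
    (hmono : ∀ g ∈ G, StrictMono g) (hirr : ∀ t : ℝ, a₀ < t → t < c₀ → ∃ g ∈ H, g t ≠ t)
    (hfG : f ∈ G) (hsupp : Ioc a a₀ ⊆ suppOf f) (hfc₀ : f c₀ ≠ c₀) {β : ℝ} (hβ : a < β) :
    ∃ v ∈ G, v c₀ < β := by
  obtain ⟨φ, hφf, hφ⟩ := exists_inv_or_self_apply_lt (hmono f hfG) isPreconnected_Ioc hsupp
  have hφG : φ ∈ G := hφf.elim (· ▸ hfG) (· ▸ G.inv_mem hfG)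
  have hφmono := hmono φ hφG
  obtain ⟨u, huG, hu⟩ : ∃ u ∈ G, u c₀ < c₀ := by
    rcases hfc₀.lt_or_gt with h | h
    · exact ⟨f, hfG, h⟩
    · refine ⟨f⁻¹, G.inv_mem hfG, ?_⟩
      rw [← (hmono f hfG).lt_iff_lt]
      simpa using h
  have hφa₀ : a₀ < φ⁻¹ a₀ := by
    rw [← hφmono.lt_iff_lt]
    simpa using hφ a₀ ⟨h1, le_rfl⟩
  obtain ⟨σ, hσH, hσ⟩ :=
    exists_mem_apply_lt_of_irreducible (fun σ hσ => hmono σ (hHG hσ)) hirr hu hφa₀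
  obtain ⟨k, hk⟩ := exists_pow_apply_lt hφmono hφ hβ
  refine ⟨φ ^ k * φ * σ * u, G.mul_mem (G.mul_mem (G.mul_mem (G.pow_mem hφG k) hφG)
    (hHG hσH)) huG, ?_⟩
  calc (φ ^ k * φ * σ * u) c₀ = (φ ^ k) (φ (σ (u c₀))) := rfl
    _ < (φ ^ k) a₀ := hmono _ (G.pow_mem hφG k) (by simpa using hφmono hσ)
    _ < β := hk

theorem memSigma1_of_pos (h1 : a < a₀) (hHG : H ≤ G) (hH : ∀ σ ∈ H, suppOf σ ⊆ Icc a₀ c₀)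
    (hirr : ∀ t : ℝ, a₀ < t → t < c₀ → ∃ g ∈ H, g t ≠ t) (hfG : f ∈ G)
    (hsupp : Ioc a a₀ ⊆ suppOf f) (hfc₀ : f c₀ ≠ c₀) (hmono : ∀ g ∈ G, StrictMono g)
    (hfix : ∀ g ∈ G, g a = a) {χ : G → ℝ} (hχ : IsChar χ) {h₀ : G}
    (hh₀ : (h₀ : Perm ℝ) ∈ H) (hpos : 0 < χ h₀) : MemSigma1 χ := by
  intro X hX
  have hcomm : ∀ v w : G, (v : Perm ℝ) c₀ < (w : Perm ℝ) a₀ →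
      ∀ i j : ℕ, Commute (v * h₀ ^ i * v⁻¹) (w * h₀ ^ j * w⁻¹) := fun v w hvw i j =>
    Subtype.ext (by
      simpa using (commute_conj_of_lt (hmono v v.2) (hmono w w.2) (hH _ (H.pow_mem hh₀ i))
        (hH _ (H.pow_mem hh₀ j)) hvw).eq)
  have hlow : ∀ w : G, a < (w : Perm ℝ) a₀ := fun w => hfix w w.2 ▸ hmono w w.2 h1
  obtain ⟨Y, hY⟩ := exists_conjPowersJoined hχ hX hpos
  refine cayleyConnected_of_forall_conjPowersJoined hχ hX hpos fun w => ?_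
  obtain ⟨v, hvG, hv⟩ := exists_mem_apply_c₀_lt h1 hHG hmono hirr hfG hsupp hfc₀
    (lt_min (hlow Y) (hlow w))
  have hvD : ConjPowersJoined X χ h₀ ⟨v, hvG⟩ := hY.of_commute hχ hX hpos fun i j =>
    (hcomm ⟨v, hvG⟩ Y (hv.trans_le (min_le_left _ _)) j i).symm
  exact hvD.of_commute hχ hX hpos (hcomm ⟨v, hvG⟩ w (hv.trans_le (min_le_right _ _)))

lemma IsChar.eq_zero_of_not_memSigma1 (h1 : a < a₀) (hHG : H ≤ G)
    (hH : ∀ σ ∈ H, suppOf σ ⊆ Icc a₀ c₀) (hirr : ∀ t : ℝ, a₀ < t → t < c₀ → ∃ g ∈ H, g t ≠ t)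
    (hfG : f ∈ G) (hsupp : Ioc a a₀ ⊆ suppOf f) (hfc₀ : f c₀ ≠ c₀)
    (hmono : ∀ g ∈ G, StrictMono g) (hfix : ∀ g ∈ G, g a = a) {χ : G → ℝ} (hχ : IsChar χ)
    (hnot : ¬ MemSigma1 χ) {y : G} (hy : (y : Perm ℝ) ∈ H) : χ y = 0 := by
  by_contra hne
  rcases lt_or_gt_of_ne hne with hneg | hpos
  · exact hnot (memSigma1_of_pos h1 hHG hH hirr hfG hsupp hfc₀ hmono hfix hχ (h₀ := y⁻¹)
      (H.inv_mem hy) (by rw [hχ.map_inv]; linarith))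
  · exact hnot (memSigma1_of_pos h1 hHG hH hirr hfG hsupp hfc₀ hmono hfix hχ hy hpos)

end Connectivity

/-- On some interval `[a, b)`, `g` is the linear map of slope `m` fixing `a`. -/
def HasRightGerm (g : ℝ → ℝ) (a m : ℝ) : Prop :=
  ∃ b, a < b ∧ ∀ u ∈ Ico a b, g u = m * (u - a) + a

section Germs

variable {g g' : ℝ → ℝ} {a m : ℝ}

lemma HasRightGerm.rightSlope_eq (h : HasRightGerm g a m) : rightSlope g a = m := by
  obtain ⟨b, hab, hg⟩ := h
  have hlin : HasDerivAt (fun u => m * (u - a) + a) m a := by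
    simpa using (((hasDerivAt_id a).sub_const a).const_mul m).add_const a
  have hderiv : HasDerivWithinAt g m (Ici a) a :=
    hlin.hasDerivWithinAt.congr_of_eventuallyEq
      (by filter_upwards [Ico_mem_nhdsGE hab] with u hu using hg u hu)
      (by simpa using hg a ⟨le_rfl, hab⟩)
  exact hderiv.derivWithin (uniqueDiffWithinAt_Ici a)

lemma HasRightGerm.of_eqOn (h : HasRightGerm g a m) {b : ℝ} (hab : a < b)
    (heq : ∀ u ∈ Ico a b, g' u = g u) : HasRightGerm g' a m := by
  obtain ⟨b', hab', hg⟩ := h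
  exact ⟨min b b', lt_min hab hab', fun u hu =>
    (heq u ⟨hu.1, hu.2.trans_le (min_le_left _ _)⟩).trans
      (hg u ⟨hu.1, hu.2.trans_le (min_le_right _ _)⟩)⟩

lemma hasRightGerm_id (a : ℝ) : HasRightGerm id a 1 :=
  ⟨a + 1, by linarith, fun u _ => by simp⟩

lemma HasRightGerm.perm_inv {g : Perm ℝ} (h : HasRightGerm g a m) (hm : 0 < m) :
    HasRightGerm ⇑g⁻¹ a m⁻¹ := by
  obtain ⟨b, hab, hg⟩ := h
  refine ⟨a + m * (b - a), by nlinarith, fun u hu => ?_⟩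
  have hv : m⁻¹ * (u - a) + a ∈ Ico a b := by
    refine ⟨by nlinarith [inv_pos.2 hm, hu.1], ?_⟩
    have : m⁻¹ * (u - a) < b - a := (inv_mul_lt_iff₀ hm).2 (by linarith [hu.2])
    linarith
  rw [Perm.inv_eq_iff_eq, hg _ hv]
  field_simp
  ring

lemma HasRightGerm.lt_one {φ : ℝ → ℝ} (h : HasRightGerm φ a m) {a₀ : ℝ} (ha : a < a₀)
    (hlt : ∀ t ∈ Ioc a a₀, φ t < t) : m < 1 := by
  obtain ⟨b, hab, hφ⟩ := h
  obtain ⟨t, hat, htb⟩ := exists_between (lt_min hab ha)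
  have := hlt t ⟨hat, htb.le.trans (min_le_right _ _)⟩
  rw [hφ t ⟨hat.le, htb.trans_le (min_le_left _ _)⟩] at this
  nlinarith

/-- No breakpoint lies just to the right of `a`, and there the local affine data `(g', g - g' t)`
is locally constant, hence constant. -/
lemma IsFinitaryPL.exists_affine_Ioo (hg : IsFinitaryPL g) (a : ℝ) :
    ∃ b, a < b ∧ ∃ m k : ℝ, ∀ u ∈ Ioo a b, g u = m * u + k := by
  obtain ⟨B, hB⟩ := hg
  obtain ⟨b, hab, hbB⟩ : ∃ b, a < b ∧ ∀ t ∈ Ioo a b, t ∉ B := by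
    have hnhds : ((B.erase a : Finset ℝ) : Set ℝ)ᶜ ∈ 𝓝 a :=
      (B.erase a).isClosed.compl_mem_nhds (by simp)
    obtain ⟨b, hab, hsub⟩ := mem_nhdsGT_iff_exists_Ioo_subset.1 (mem_nhdsWithin_of_mem_nhds hnhds)
    exact ⟨b, hab, fun t ht htB => hsub ht (by simp [htB, ht.1.ne'])⟩
  let F : ℝ → ℝ × ℝ := fun t => (deriv g t, g t - deriv g t * t)
  have hloc : ∀ t ∈ Ioo a b, ∀ᶠ u in 𝓝 t, F t = F u := by
    intro t ht
    obtain ⟨m, k, ε, hε, hgt⟩ := hB t (hbB t ht)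
    have hnear : ∀ᶠ v in 𝓝 t, g v = m * v + k := by
      filter_upwards [Metric.ball_mem_nhds t hε] with v hv
      exact hgt v (by simpa [Real.dist_eq] using hv)
    have hF : ∀ᶠ u in 𝓝 t, F u = (m, k) := by
      filter_upwards [hnear.eventually_nhds] with u hu
      have hu' : g =ᶠ[𝓝 u] fun v => m * v + k := hu
      have hd : deriv g u = m := by rw [hu'.deriv_eq]; simp
      simp only [F, hd, hu'.eq_of_nhds]
      ring_nf
    filter_upwards [hF] with u hu using hF.self_of_nhds.trans hu.symm
  obtain ⟨t₀, ht₀⟩ := nonempty_Ioo.2 hab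
  refine ⟨b, hab, deriv g t₀, g t₀ - deriv g t₀ * t₀, fun u hu => ?_⟩
  obtain ⟨hd, hk⟩ := Prod.mk.inj (isPreconnected_Ioo.induction₂ (fun x y => F x = F y)
    (fun x hx => (hloc x hx).filter_mono nhdsWithin_le_nhds) (fun _ _ _ _ _ _ => Eq.trans)
    (fun _ _ _ _ => Eq.symm) ht₀ hu)
  rw [← hd] at hk
  linarith

lemma IsFinitaryPL.exists_hasRightGerm {g : Perm ℝ} (hpl : IsFinitaryPL g) (hg : StrictMono g)
    (ha : g a = a) : ∃ m, 0 < m ∧ HasRightGerm g a m := by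
  obtain ⟨b, hab, m, k, hgmk⟩ := hpl.exists_affine_Ioo a
  have hIcc : EqOn g (fun u => m * u + k) (Icc a b) := by
    rw [← closure_Ioo hab.ne]
    exact EqOn.closure hgmk hg.perm_continuous (by fun_prop)
  have hk : k = a - m * a := by linarith [hIcc (left_mem_Icc.2 hab.le)]
  have hmid := hg (show a < b by exact hab)
  rw [hIcc (left_mem_Icc.2 hab.le), hIcc (right_mem_Icc.2 hab.le)] at hmid
  refine ⟨m, by nlinarith, b, hab, fun u hu => ?_⟩
  rw [hIcc (Ico_subset_Icc_self hu), hk]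
  ring

end Germs

section LeftEnd

variable {a a₀ c₀ : ℝ} {H G : Subgroup (Perm ℝ)} {f φ σ : Perm ℝ}

lemma mapsTo_Ico_of_apply_lt (hφ : StrictMono φ) (hφa : φ a = a)
    (hlt : ∀ t ∈ Ioc a a₀, φ t < t) : MapsTo φ (Ico a a₀) (Ico a a₀) := by
  intro t ht
  have hle : φ t ≤ t := ht.1.eq_or_lt.elim (fun h => h ▸ hφa.le) fun h => (hlt t ⟨h, ht.2.le⟩).le
  exact ⟨hφa ▸ hφ.monotone ht.1, hle.trans_lt ht.2⟩

lemma conj_pow_mem_fixingSubgroup (hmaps : MapsTo φ (Ico a a₀) (Ico a a₀))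
    (hσ : suppOf σ ⊆ Icc a₀ c₀) (n : ℕ) :
    (φ ^ n)⁻¹ * σ * φ ^ n ∈ fixingSubgroup (Perm ℝ) (Ico a a₀) := by
  rw [mem_fixingSubgroup_iff]
  intro t ht
  simp [Perm.smul_def, apply_eq_self_of_lt hσ (hmaps.perm_pow n ht).2]

/-- `φ σ φ⁻¹` moves the point `φ t₀`, and for `n ≥ 1` the map `φ σ φ⁻¹ φⁿ` moves it too, since
`φⁿ` pushes it below `φ a₀`, where `φ σ φ⁻¹` is the identity. -/
lemma conj_mul_pow_not_mem_fixingSubgroup (hφ : StrictMono φ)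
    (hmaps : MapsTo φ (Ico a a₀) (Ico a a₀)) (hlt : ∀ t ∈ Ioc a a₀, φ t < t)
    (hσ : suppOf σ ⊆ Icc a₀ c₀) {t₀ : ℝ} (hσt₀ : σ t₀ ≠ t₀) (ht₀ : φ t₀ ∈ Ioo a a₀) (n : ℕ) :
    φ * σ * φ⁻¹ * φ ^ n ∉ fixingSubgroup (Perm ℝ) (Ico a a₀) := by
  intro hmem
  have hfixed := (mem_fixingSubgroup_iff _).1 hmem (φ t₀) (Ioo_subset_Ico_self ht₀)
  rcases n with _ | n
  · exact hσt₀ (by simpa [Perm.smul_def] using hfixed)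
  · have hpow : (φ ^ n) (φ t₀) < a₀ := (hmaps.perm_pow n (Ioo_subset_Ico_self ht₀)).2
    have hfix : σ ((φ ^ n) (φ t₀)) = (φ ^ n) (φ t₀) := apply_eq_self_of_lt hσ hpow
    have hne := (pow_succ_apply_lt_self hφ (hlt _ (Ioo_subset_Ioc_self ht₀)) n).ne
    rw [pow_succ'] at hne hfixed
    exact hne (by simpa [Perm.smul_def, hfix] using hfixed)

lemma exists_contraction_hasRightGerm (hfm : StrictMono f) (hfpl : IsFinitaryPL f) (hfa : f a = a)
    (hsupp : Ioc a a₀ ⊆ suppOf f) :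
    ∃ φ, (φ = f ∨ φ = f⁻¹) ∧ StrictMono φ ∧ φ a = a ∧ (∀ t ∈ Ioc a a₀, φ t < t) ∧
      ∃ m, 0 < m ∧ HasRightGerm φ a m := by
  obtain ⟨φ, hφf, hlt⟩ := exists_inv_or_self_apply_lt hfm isPreconnected_Ioc hsupp
  obtain ⟨m, hm, hfgerm⟩ := hfpl.exists_hasRightGerm hfm hfa
  rcases hφf with rfl | rfl
  · exact ⟨_, .inl rfl, hfm, hfa, hlt, m, hm, hfgerm⟩
  · exact ⟨_, .inr rfl, hfm.perm_inv, by rw [Perm.inv_eq_iff_eq, hfa], hlt, m⁻¹, inv_pos.2 hm,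
      hfgerm.perm_inv hm⟩

lemma exists_conj_hasRightGerm_one_not_mem_fixingSubgroup (h1 : a < a₀) (h2 : a₀ < c₀)
    (hH : ∀ σ ∈ H, suppOf σ ⊆ Icc a₀ c₀) (hirr : ∀ t : ℝ, a₀ < t → t < c₀ → ∃ g ∈ H, g t ≠ t)
    (hφ : StrictMono φ) (hφa : φ a = a) (hlt : ∀ t ∈ Ioc a a₀, φ t < t) :
    ∃ σ ∈ H, HasRightGerm ⇑(φ * σ * φ⁻¹) a 1 ∧
      ∀ n : ℕ, φ * σ * φ⁻¹ * φ ^ n ∉ fixingSubgroup (Perm ℝ) (Ico a a₀) := by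
  have hφa₀ : a₀ < φ⁻¹ a₀ := by
    rw [← hφ.lt_iff_lt]
    simpa using hlt a₀ ⟨h1, le_rfl⟩
  obtain ⟨t₀, ht₀, ht₀'⟩ := exists_between (lt_min hφa₀ h2)
  obtain ⟨σ, hσH, hσ⟩ := hirr t₀ ht₀ (ht₀'.trans_le (min_le_right _ _))
  have hφt₀ : φ t₀ ∈ Ioo a a₀ :=
    ⟨hφa ▸ hφ (h1.trans ht₀), by simpa using hφ (ht₀'.trans_le (min_le_left _ _))⟩
  refine ⟨σ, hσH, (hasRightGerm_id a).of_eqOn (hφa ▸ hφ h1 : a < φ a₀) fun u hu => ?_,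
    conj_mul_pow_not_mem_fixingSubgroup hφ (mapsTo_Ico_of_apply_lt hφ hφa hlt) hlt (hH σ hσH)
      hσ hφt₀⟩
  have hu' : φ⁻¹ u < a₀ := by rw [← hφ.lt_iff_lt]; simpa using hu.2
  show φ (σ (φ⁻¹ u)) = u
  rw [apply_eq_self_of_lt (hH σ hσH) hu']
  exact φ.apply_symm_apply u

theorem chiL_ne_zero_and_not_memSigma1 (h1 : a < a₀) (h2 : a₀ < c₀)
    (hH : ∀ σ ∈ H, suppOf σ ⊆ Icc a₀ c₀) (hirr : ∀ t : ℝ, a₀ < t → t < c₀ → ∃ g ∈ H, g t ≠ t)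
    (hfm : StrictMono f) (hfpl : IsFinitaryPL f) (hfa : f a = a) (hsupp : Ioc a a₀ ⊆ suppOf f)
    (hG : G = Subgroup.closure ((H : Set (Perm ℝ)) ∪ {f})) :
    (∃ g : G, chiL G a g ≠ 0) ∧ ¬ MemSigma1 (chiL G a) := by
  subst hG
  obtain ⟨φ, hφf, hφ, hφa, hlt, m, hm, hgerm⟩ := exists_contraction_hasRightGerm hfm hfpl hfa hsupp
  have hφG : φ ∈ Subgroup.closure ((H : Set (Perm ℝ)) ∪ {f}) := by
    have hfG : f ∈ Subgroup.closure ((H : Set (Perm ℝ)) ∪ {f}) :=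
      Subgroup.subset_closure (mem_union_right _ rfl)
    exact hφf.elim (· ▸ hfG) (· ▸ Subgroup.inv_mem _ hfG)
  have hmaps := mapsTo_Ico_of_apply_lt hφ hφa hlt
  set G := Subgroup.closure ((H : Set (Perm ℝ)) ∪ {f})
  set K := (fixingSubgroup (Perm ℝ) (Ico a a₀)).comap G.subtype
  have hK : ∀ k ∈ K, chiL G a (k * ⟨φ, hφG⟩) < 0 := fun k hk => by
    have hkφ : HasRightGerm ⇑((k : Perm ℝ) * φ) a m := hgerm.of_eqOn h1 fun u hu =>
      (mem_fixingSubgroup_iff _).1 hk _ (hmaps hu)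
    rw [chiL, Subgroup.coe_mul, hkφ.rightSlope_eq]
    exact Real.log_neg hm (hgerm.lt_one h1 hlt)
  refine ⟨⟨⟨φ, hφG⟩, by simpa using (hK 1 K.one_mem).ne⟩, fun hsig => ?_⟩
  obtain ⟨σ, hσH, hgstar, hgK⟩ :=
    exists_conj_hasRightGerm_one_not_mem_fixingSubgroup h1 h2 hH hirr hφ hφa hlt
  have hσG : σ ∈ G := Subgroup.subset_closure (Or.inl hσH)
  refine not_cayleyConnected_of_mul_pow_mem (K := K) (A := {y : G | (y : Perm ℝ) ∈ H})
    (g := ⟨φ, hφG⟩ * ⟨σ, hσG⟩ * ⟨φ, hφG⟩⁻¹) ?_ ?_ hK ?_ ?_ ?_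
    (hsig _ Subgroup.closure_closure_coe_preimage)
  · rintro x (hx | hx)
    · exact .inl hx
    · rcases hφf with rfl | rfl
      · exact .inr (.inl (Subtype.ext hx))
      · exact .inr (.inr (Subtype.ext (by simpa using hx)))
  · intro y hy n
    simp only [K, Subgroup.mem_comap, map_mul, map_inv, map_pow, Subgroup.coe_subtype]
    exact conj_pow_mem_fixingSubgroup hmaps (hH _ hy) n
  · rw [chiL, Subgroup.coe_one, Perm.coe_one, (hasRightGerm_id a).rightSlope_eq, Real.log_one]
  · simp only [chiL, Subgroup.coe_mul, Subgroup.coe_inv]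
    rw [hgstar.rightSlope_eq, Real.log_one]
  · intro n
    simp only [K, Subgroup.mem_comap, map_mul, map_inv, map_pow, Subgroup.coe_subtype]
    exact hgK n

end LeftEnd

section Reflection

def reflect : Perm ℝ ≃* Perm ℝ := MulAut.conj (Equiv.neg ℝ)

@[simp] lemma reflect_apply (g : Perm ℝ) (t : ℝ) : reflect g t = -g (-t) := by
  simp [reflect, MulAut.conj_apply]

lemma StrictMono.reflect {g : Perm ℝ} (hg : StrictMono g) : StrictMono (reflect g) :=
  fun x y hxy => by simpa using hg (neg_lt_neg hxy)

lemma IsFinitaryPL.reflect {g : Perm ℝ} (hg : IsFinitaryPL g) : IsFinitaryPL (reflect g) := by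
  obtain ⟨B, hB⟩ := hg
  refine ⟨B.image Neg.neg, fun t ht => ?_⟩
  obtain ⟨m, b, ε, hε, h⟩ := hB (-t) fun h => ht (Finset.mem_image.2 ⟨-t, h, neg_neg t⟩)
  refine ⟨m, -b, ε, hε, fun u hu => ?_⟩
  rw [reflect_apply, h (-u) (by rwa [show -u - -t = -(u - t) by ring, abs_neg])]
  ring

lemma mem_suppOf_reflect {g : Perm ℝ} {t : ℝ} : t ∈ suppOf (reflect g) ↔ -t ∈ suppOf g := by
  simp [suppOf, neg_eq_iff_eq_neg]

lemma leftSlope_eq_rightSlope_reflect (g : Perm ℝ) (c : ℝ) :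
    leftSlope g c = rightSlope (reflect g) (-c) := by
  have hfun : ⇑(reflect g) = -fun t => g (-t) := funext fun t => reflect_apply g t
  rw [rightSlope, hfun, derivWithin.neg, derivWithin_comp_neg, neg_Ici, neg_neg, neg_neg,
    leftSlope]

lemma MemSigma1.of_comp_mulEquiv {Γ Γ' : Type*} [Group Γ] [Group Γ'] (e : Γ ≃* Γ')
    {χ : Γ' → ℝ} (h : MemSigma1 (χ ∘ e)) : MemSigma1 χ := by
  intro X hX g k hg hk
  have hX' : Subgroup.closure (e.symm '' X) = ⊤ := by
    have := MonoidHom.map_closure (e.symm : Γ' →* Γ) X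
    rwa [MonoidHom.coe_coe, hX, Subgroup.map_top_of_surjective _ e.symm.surjective,
      eq_comm] at this
  have hpath := h _ hX' (e.symm g) (e.symm k) (by simpa using hg) (by simpa using hk)
  have hmapped : CayleyJoined X χ (e (e.symm g)) (e (e.symm k)) :=
    Relation.ReflTransGen.lift e (fun u v hedge => ?_) _ _ hpath
  · rwa [e.apply_symm_apply, e.apply_symm_apply] at hmapped
  · obtain ⟨hu, hv, _, ⟨x, hx, rfl⟩, hux⟩ := hedge
    refine ⟨hu, hv, x, hx, ?_⟩
    rcases hux with rfl | rfl <;> simp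

end Reflection

section RightEnd

variable {a₀ c₀ c : ℝ} {H G : Subgroup (Perm ℝ)} {f : Perm ℝ}

theorem chiR_ne_zero_and_not_memSigma1 (h2 : a₀ < c₀) (h3 : c₀ < c)
    (hH : ∀ σ ∈ H, suppOf σ ⊆ Icc a₀ c₀) (hirr : ∀ t : ℝ, a₀ < t → t < c₀ → ∃ g ∈ H, g t ≠ t)
    (hfm : StrictMono f) (hfpl : IsFinitaryPL f) (hfc : f c = c) (hsupp : Ico c₀ c ⊆ suppOf f)
    (hG : G = Subgroup.closure ((H : Set (Perm ℝ)) ∪ {f})) :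
    (∃ g : G, chiR G c g ≠ 0) ∧ ¬ MemSigma1 (chiR G c) := by
  let e := reflect.subgroupMap G
  have hchi : chiR G c = chiL (G.map (reflect : Perm ℝ →* Perm ℝ)) (-c) ∘ e := funext fun g => by
    simp [chiR, chiL, e, leftSlope_eq_rightSlope_reflect]
  have hH' : ∀ σ ∈ H.map (reflect : Perm ℝ →* Perm ℝ), suppOf σ ⊆ Icc (-c₀) (-a₀) := by
    rintro _ ⟨σ, hσ, rfl⟩ t ht
    have := hH σ hσ (mem_suppOf_reflect.1 ht)
    exact ⟨by linarith [this.2], by linarith [this.1]⟩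
  have hirr' : ∀ t : ℝ, -c₀ < t → t < -a₀ →
      ∃ g ∈ H.map (reflect : Perm ℝ →* Perm ℝ), g t ≠ t := by
    intro t ht1 ht2
    obtain ⟨g, hg, hne⟩ := hirr (-t) (by linarith) (by linarith)
    exact ⟨reflect g, Subgroup.mem_map_of_mem _ hg, by simpa [neg_eq_iff_eq_neg] using hne⟩
  have hsupp' : Ioc (-c) (-c₀) ⊆ suppOf (reflect f) := fun t ht =>
    mem_suppOf_reflect.2 (hsupp ⟨by linarith [ht.2], by linarith [ht.1]⟩)
  have hG' : G.map (reflect : Perm ℝ →* Perm ℝ) =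
      Subgroup.closure ((H.map (reflect : Perm ℝ →* Perm ℝ) : Set (Perm ℝ)) ∪ {reflect f}) := by
    rw [hG, MonoidHom.map_closure, image_union, image_singleton]
    rfl
  obtain ⟨⟨g, hg⟩, hnot⟩ := chiL_ne_zero_and_not_memSigma1 (by linarith) (by linarith) hH' hirr'
    hfm.reflect hfpl.reflect (by simp [hfc]) hsupp' hG'
  exact ⟨⟨e.symm g, by simpa [hchi] using hg⟩, fun h => hnot ((hchi ▸ h).of_comp_mulEquiv e)⟩

end RightEnd

/-- **Lemma (Statement 15).** Let `a < a₀ < c₀ < c`, let `H ≤ PL_o([a₀,c₀])` be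
irreducible, let `f ∈ PL_o([a,c])` have support containing `]a,a₀] ∪ [c₀,c[`, let
`G = gp(H ∪ {f})` and let `N` be the normal closure of `H` in `G`. Then
`{[χ_ℓ], [χ_r]} ⊆ Σ¹(G)^c ⊆ S(G, N)`. -/
theorem sigma1_complement_bounded_by_infinite_cyclic
    (a a₀ c₀ c : ℝ) (h1 : a < a₀) (h2 : a₀ < c₀) (h3 : c₀ < c)
    (H : Subgroup (Equiv.Perm ℝ)) (hH : (H : Set (Equiv.Perm ℝ)) ⊆ PLo (Icc a₀ c₀))
    (hHirr : ∀ t : ℝ, a₀ < t → t < c₀ → ∃ g ∈ H, g t ≠ t)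
    (f : Equiv.Perm ℝ) (hf : f ∈ PLo (Icc a c))
    (hsupp : Ioc a a₀ ∪ Ico c₀ c ⊆ suppOf ⇑f) :
    ∀ G : Subgroup (Equiv.Perm ℝ),
      G = Subgroup.closure ((H : Set (Equiv.Perm ℝ)) ∪ {f}) →
    ∀ N : Subgroup G,
      N = Subgroup.normalClosure {x : G | (x : Equiv.Perm ℝ) ∈ H} →
      ((∃ g : G, chiL G a g ≠ 0) ∧ ¬ MemSigma1 (chiL G a)) ∧
      ((∃ g : G, chiR G c g ≠ 0) ∧ ¬ MemSigma1 (chiR G c)) ∧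
      (∀ χ : G → ℝ, IsChar χ → χ ≠ 0 → ¬ MemSigma1 χ → ∀ x ∈ N, χ x = 0) := by
  intro G hG N hN
  have hHsupp : ∀ σ ∈ H, suppOf σ ⊆ Icc a₀ c₀ := fun σ hσ => (hH hσ).2.2
  have hGa : ∀ g ∈ G, StrictMono g ∧ g a = a := fun g hg =>
    strictMono_and_apply_eq_of_mem_closure (S := (H : Set (Perm ℝ)) ∪ {f}) (by
      rintro σ (hσ | rfl)
      · exact ⟨(hH hσ).1, apply_eq_self_of_lt (hHsupp σ hσ) h1⟩
      · exact ⟨hf.1, apply_left_eq_of_suppOf_subset hf.1 hf.2.2⟩) (hG ▸ hg)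
  refine ⟨chiL_ne_zero_and_not_memSigma1 h1 h2 hHsupp hHirr hf.1 hf.2.1
      (apply_left_eq_of_suppOf_subset hf.1 hf.2.2) (subset_union_left.trans hsupp) hG,
    chiR_ne_zero_and_not_memSigma1 h2 h3 hHsupp hHirr hf.1 hf.2.1
      (apply_right_eq_of_suppOf_subset hf.1 hf.2.2) (subset_union_right.trans hsupp) hG,
    fun χ hχ _ hnot => ?_⟩
  have hHG : H ≤ G := hG ▸ fun σ hσ => Subgroup.subset_closure (Or.inl hσ)
  have hfG : f ∈ G := hG ▸ Subgroup.subset_closure (Or.inr rfl)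
  have hNker : N ≤ hχ.toMonoidHom.ker := hN ▸ Subgroup.normalClosure_le_normal fun y hy =>
    hχ.mem_ker_toMonoidHom.2 (hχ.eq_zero_of_not_memSigma1 h1 hHG hHsupp hHirr hfG
      (subset_union_left.trans hsupp) (hsupp (Or.inr ⟨le_rfl, h3⟩))
      (fun g hg => (hGa g hg).1) (fun g hg => (hGa g hg).2) hnot hy)
  exact fun x hx => hχ.mem_ker_toMonoidHom.1 (hNker hx)
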